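/- In the general fixed-point-matrix setup, for every λ ∈ (0,2): the fixed-point set of M_λ equals the fixed-point set of M, which equals ker(W_G(I − W_J) + (I − W_G) W_J); and the powers M_λ^k converge, as k → ∞, to M^∞, the orthogonal projection onto Fix M = ker(W_G(I − W_J) + (I − W_G) W_J). -/

import Mathlib

noncomputable section
open Filter Topology

/-- `ℝⁿ` as a Euclidean space. -/
abbrev E (n : ℕ) := EuclideanSpace ℝ (Fin n)

/-- Orthogonal projection onto a subspace `T`, as an endomorphism of `ℝⁿ`. -/
def projCLM {n : ℕ} (T : Submodule ℝ (E n)) : E n →L[ℝ] E n :=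
  T.subtypeL.comp (Submodule.orthogonalProjection T)

/-- A linear map is symmetric positive semidefinite. -/
def IsSymPSD {n : ℕ} (A : E n →L[ℝ] E n) : Prop :=
  (∀ x y : E n, (inner ℝ (A x) y : ℝ) = inner ℝ x (A y)) ∧ ∀ x : E n, (0 : ℝ) ≤ inner ℝ (A x) x

/-- `W = P_T ∘ (I + P_T ∘ H ∘ P_T)⁻¹ ∘ P_T`, the building block of the Douglas–Rachford
fixed-point matrix (`Ring.inverse` is the genuine inverse since `I + P_T H P_T` is
invertible for symmetric positive semidefinite `H`). -/
def Wop {n : ℕ} (T : Submodule ℝ (E n)) (H : E n →L[ℝ] E n) : E n →L[ℝ] E n :=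
  projCLM T * Ring.inverse (1 + projCLM T * H * projCLM T) * projCLM T

/-- The Douglas–Rachford fixed-point matrix `M = I + 2 W_G W_J − W_G − W_J`. -/
def Mop {n : ℕ} (TJ TG : Submodule ℝ (E n)) (HJ HG : E n →L[ℝ] E n) : E n →L[ℝ] E n :=
  1 + (2 : ℝ) • (Wop TG HG * Wop TJ HJ) - Wop TG HG - Wop TJ HJ

/-- The relaxed matrix `M_λ = (1 − λ) I + λ M`. -/
def Mlam {n : ℕ} (lam : ℝ) (TJ TG : Submodule ℝ (E n)) (HJ HG : E n →L[ℝ] E n) :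
    E n →L[ℝ] E n :=
  (1 - lam) • (1 : E n →L[ℝ] E n) + lam • Mop TJ TG HJ HG

/-- The fixed-point set `Fix A = {x | A x = x}` as a submodule, i.e. `ker (A − I)`. -/
def FixM {n : ℕ} (A : E n →L[ℝ] E n) : Submodule ℝ (E n) :=
  LinearMap.ker ((A - 1 : E n →L[ℝ] E n) : E n →ₗ[ℝ] E n)

/-- `M^∞`: the orthogonal projection onto `Fix M`. -/
def Minf {n : ℕ} (TJ TG : Submodule ℝ (E n)) (HJ HG : E n →L[ℝ] E n) : E n →L[ℝ] E n :=
  projCLM (FixM (Mop TJ TG HJ HG))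

/-- The spectral radius of an endomorphism of `ℝⁿ`: the supremum of the moduli of the
complex eigenvalues (eigenvalues of the complexified matrix). -/
def specRad {n : ℕ} (A : E n →L[ℝ] E n) : ℝ :=
  sSup ((fun z : ℂ => ‖z‖) ''
    spectrum ℂ (((LinearMap.toMatrix (EuclideanSpace.basisFun (Fin n) ℝ).toBasis
      (EuclideanSpace.basisFun (Fin n) ℝ).toBasis) A.toLinearMap).map (algebraMap ℝ ℂ)))

/-- The cosine of the Friedrichs angle between two subspaces `U` and `V`. -/
def cF {n : ℕ} (U V : Submodule ℝ (E n)) : ℝ :=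
  sSup {r : ℝ | ∃ u v : E n, u ∈ U ⊓ (U ⊓ V)ᗮ ∧ v ∈ V ⊓ (U ⊓ V)ᗮ ∧
    ‖u‖ ≤ 1 ∧ ‖v‖ ≤ 1 ∧ r = (inner ℝ u v : ℝ)}

/-!
Write `Q = P_T H P_T`. For `z = (I + Q)⁻¹ P_T x` one has
`⟪W x, x⟫ = ‖z‖² + ⟪Q z, z⟫ ≥ ‖P_T z‖² = ‖W x‖²`, so `W` is firmly nonexpansive and the
reflection `R = I − 2W` is nonexpansive. Hence `M_λ = (1 − λ/2) I + (λ/2) R_G R_J` is a strict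
average of the identity with a nonexpansive map: it has the fixed points of `M` and strictly
shrinks every vector it does not fix. A contraction and its adjoint fix the same vectors, so
`M_λ M^∞ = M^∞ M_λ = M^∞` and `M_λ^k − M^∞ = (M_λ − M^∞)^k`; in finite dimension the strict
shrinking on `(Fix M)ᗮ` gives `‖M_λ − M^∞‖ < 1`.
-/

open RealInnerProductSpace

theorem sub_pow_succ_of_mul_eq {R : Type*} [Ring R] {t p : R} (htp : t * p = p)
    (hpt : p * t = p) (hp : IsIdempotentElem p) (k : ℕ) :
    (t - p) ^ (k + 1) = t ^ (k + 1) - p := by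
  have hpow : ∀ k : ℕ, p * t ^ k = p := by
    intro k
    induction k with
    | zero => rw [pow_zero, mul_one]
    | succ k ih => rw [pow_succ, ← mul_assoc, ih, hpt]
  induction k with
  | zero => rw [zero_add, pow_one, pow_one]
  | succ k ih =>
    rw [pow_succ', ih, mul_sub, sub_mul, sub_mul, ← pow_succ', htp, hpow, hp.eq]
    abel

theorem ContinuousLinearMap.exists_mem_sphere_norm_apply_eq_opNorm {V F : Type*}
    [NormedAddCommGroup V] [NormedSpace ℝ V] [FiniteDimensional ℝ V] [Nontrivial V]
    [NormedAddCommGroup F] [NormedSpace ℝ F] (f : V →L[ℝ] F) :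
    ∃ x ∈ Metric.sphere (0 : V) 1, ‖f x‖ = ‖f‖ := by
  have hc : IsCompact ((fun x => ‖f x‖) '' Metric.sphere (0 : V) 1) :=
    (isCompact_sphere 0 1).image (by fun_prop)
  have := hc.sSup_mem ((NormedSpace.sphere_nonempty.mpr zero_le_one).image _)
  rwa [f.sSup_sphere_eq_norm] at this

section InnerProductSpace

variable {V : Type*} [NormedAddCommGroup V] [InnerProductSpace ℝ V]

theorem averaged_apply_eq_self_iff {α : ℝ} (hα : α ≠ 0) (A : V →L[ℝ] V) (x : V) :
    ((1 - α) • (1 : V →L[ℝ] V) + α • A) x = x ↔ A x = x := by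
  have h : ((1 - α) • (1 : V →L[ℝ] V) + α • A) x - x = α • (A x - x) := by
    simp only [add_apply, smul_apply, one_apply_eq_self]
    module
  rw [← sub_eq_zero, h, smul_eq_zero, sub_eq_zero, or_iff_right hα]

theorem norm_averaged_apply_lt {N : V →L[ℝ] V} (hN : ‖N‖ ≤ 1) {α : ℝ} (hα₀ : 0 < α)
    (hα₁ : α < 1) {x : V} (hx : N x ≠ x) :
    ‖((1 - α) • (1 : V →L[ℝ] V) + α • N) x‖ < ‖x‖ := by
  have hNx : ‖N x‖ ≤ ‖x‖ := N.le_of_opNorm_le hN x |>.trans_eq (one_mul _)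
  have hsub : 0 < ‖x - N x‖ := norm_pos_iff.mpr (sub_ne_zero.mpr hx.symm)
  have hid : ‖((1 - α) • (1 : V →L[ℝ] V) + α • N) x‖ ^ 2
      = (1 - α) * ‖x‖ ^ 2 + α * ‖N x‖ ^ 2 - α * (1 - α) * ‖x - N x‖ ^ 2 := by
    simp only [add_apply, smul_apply, one_apply_eq_self, ← real_inner_self_eq_norm_sq,
      inner_add_left, inner_add_right, inner_sub_left, inner_sub_right, real_inner_smul_left,
      real_inner_smul_right, real_inner_comm x (N x)]
    ring
  refine lt_of_pow_lt_pow_left₀ 2 (norm_nonneg x) ?_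
  rw [hid]
  nlinarith [mul_pos (mul_pos hα₀ (sub_pos.mpr hα₁)) (pow_pos hsub 2),
    pow_le_pow_left₀ (norm_nonneg _) hNx 2]

theorem adjoint_apply_eq_self_of_norm_le_one [CompleteSpace V] {T : V →L[ℝ] V}
    (hT : ‖T‖ ≤ 1) {x : V} (hx : T x = x) : T.adjoint x = x := by
  have hle : ‖T.adjoint x‖ ≤ ‖x‖ :=
    T.adjoint.le_of_opNorm_le (by rwa [LinearIsometryEquiv.norm_map]) x |>.trans_eq (one_mul _)
  have hinner : ⟪T.adjoint x, x⟫ = ‖x‖ ^ 2 := by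
    rw [ContinuousLinearMap.adjoint_inner_left, hx, real_inner_self_eq_norm_sq]
  have hsq : ‖T.adjoint x - x‖ ^ 2 ≤ 0 := by
    rw [norm_sub_sq_real, hinner]
    nlinarith [norm_nonneg (T.adjoint x)]
  exact sub_eq_zero.mp (norm_eq_zero.mp (by nlinarith [norm_nonneg (T.adjoint x - x)]))

theorem mem_ker_sub_one_iff (T : V →L[ℝ] V) (x : V) :
    x ∈ LinearMap.ker ((T - 1 : V →L[ℝ] V) : V →ₗ[ℝ] V) ↔ T x = x := by
  simp [sub_eq_zero]

theorem norm_one_sub_two_smul_le_one {W : V →L[ℝ] V} (hW : ∀ x, ‖W x‖ ^ 2 ≤ ⟪W x, x⟫) :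
    ‖1 - (2 : ℝ) • W‖ ≤ 1 := by
  refine (1 - (2 : ℝ) • W).opNorm_le_bound zero_le_one fun x => ?_
  rw [one_mul]
  refine pow_le_pow_iff_left₀ (norm_nonneg _) (norm_nonneg x) two_ne_zero |>.mp ?_
  calc ‖(1 - (2 : ℝ) • W) x‖ ^ 2 = ‖x‖ ^ 2 - 4 * ⟪W x, x⟫ + 4 * ‖W x‖ ^ 2 := by
        rw [sub_apply, one_apply_eq_self, smul_apply, norm_sub_sq_real, norm_smul,
          real_inner_smul_right, real_inner_comm, Real.norm_two]
        ring
    _ ≤ ‖x‖ ^ 2 := by linarith [hW x]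

variable [FiniteDimensional ℝ V]

theorem isUnit_one_add_of_inner_self_nonneg {A : V →L[ℝ] V} (hA : ∀ x, 0 ≤ ⟪A x, x⟫) :
    IsUnit (1 + A) := by
  have hinj : LinearMap.ker ((1 + A : V →L[ℝ] V) : V →ₗ[ℝ] V) = ⊥ := by
    refine (Submodule.eq_bot_iff _).mpr fun x hx => ?_
    have h0 : ‖x‖ ^ 2 + ⟪A x, x⟫ = 0 := by
      rw [← real_inner_self_eq_norm_sq, ← inner_add_left]
      simpa using congrArg (⟪·, x⟫) (LinearMap.mem_ker.mp hx)
    exact norm_eq_zero.mp (by nlinarith [hA x, norm_nonneg x])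
  exact ((LinearMap.isUnit_iff_ker_eq_bot _).mpr hinj).map (Module.End.toContinuousLinearMap V)

theorem norm_sq_le_inner_starProjection_resolvent (K : Submodule ℝ V) {A : V →L[ℝ] V}
    (hA : ∀ x, 0 ≤ ⟪A x, x⟫) (x : V) :
    ‖(K.starProjection * Ring.inverse (1 + K.starProjection * A * K.starProjection) *
        K.starProjection) x‖ ^ 2 ≤
      ⟪(K.starProjection * Ring.inverse (1 + K.starProjection * A * K.starProjection) *
        K.starProjection) x, x⟫ := by
  set P := K.starProjection
  set Q := P * A * P
  have hQ : ∀ z, 0 ≤ ⟪Q z, z⟫ := fun z => by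
    rw [mul_apply_eq_comp, mul_apply_eq_comp, Submodule.inner_starProjection_left_eq_right]
    exact hA (P z)
  set z := Ring.inverse (1 + Q) (P x)
  have hz : z + Q z = P x := by
    simpa using congrArg (· (P x))
      (Ring.mul_inverse_cancel _ (isUnit_one_add_of_inner_self_nonneg hQ))
  show ‖P z‖ ^ 2 ≤ ⟪P z, x⟫
  calc ‖P z‖ ^ 2 ≤ ‖z‖ ^ 2 :=
        pow_le_pow_left₀ (norm_nonneg _) (K.norm_starProjection_apply_le z) 2
    _ ≤ ‖z‖ ^ 2 + ⟪Q z, z⟫ := le_add_of_nonneg_right (hQ z)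
    _ = ⟪P z, x⟫ := by
      rw [Submodule.inner_starProjection_left_eq_right, ← hz, inner_add_right,
        real_inner_self_eq_norm_sq, real_inner_comm]

theorem starProjection_ker_sub_one_mul {T : V →L[ℝ] V} (hT : ‖T‖ ≤ 1) :
    (LinearMap.ker ((T - 1 : V →L[ℝ] V) : V →ₗ[ℝ] V)).starProjection * T =
      (LinearMap.ker ((T - 1 : V →L[ℝ] V) : V →ₗ[ℝ] V)).starProjection := by
  set P := (LinearMap.ker ((T - 1 : V →L[ℝ] V) : V →ₗ[ℝ] V)).starProjection
  have hfix : ∀ x, T (P x) = P x := fun x =>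
    (mem_ker_sub_one_iff T _).mp (Submodule.starProjection_apply_mem _ x)
  have hadj : T.adjoint * P = P :=
    ContinuousLinearMap.ext fun x => adjoint_apply_eq_self_of_norm_le_one hT (hfix x)
  have hP : star P = P := (isSelfAdjoint_starProjection _).star_eq
  calc P * T = star (T.adjoint * P) := by
        rw [star_mul, hP, ← ContinuousLinearMap.star_eq_adjoint, star_star]
    _ = P := by rw [hadj, hP]

theorem tendsto_pow_of_norm_apply_lt {T : V →L[ℝ] V} (hT : ∀ x, T x ≠ x → ‖T x‖ < ‖x‖) :
    Tendsto (fun k : ℕ => T ^ k) atTop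
      (𝓝 (LinearMap.ker ((T - 1 : V →L[ℝ] V) : V →ₗ[ℝ] V)).starProjection) := by
  rcases subsingleton_or_nontrivial V with hV | hV
  · exact tendsto_const_nhds.congr fun k => Subsingleton.elim _ _
  set F := LinearMap.ker ((T - 1 : V →L[ℝ] V) : V →ₗ[ℝ] V)
  set P := F.starProjection
  have hmemF : ∀ x, x ∈ F ↔ T x = x := mem_ker_sub_one_iff T
  have hTnorm : ‖T‖ ≤ 1 := T.opNorm_le_bound zero_le_one fun x => by
    rw [one_mul]
    by_cases hx : T x = x
    · rw [hx]
    · exact (hT x hx).le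
  have hTP : T * P = P := ContinuousLinearMap.ext fun x =>
    (hmemF _).mp (Submodule.starProjection_apply_mem F x)
  have hPT : P * T = P := starProjection_ker_sub_one_mul hTnorm
  -- `T - P = T (1 - P)` acts only on `Fᗮ`, where `T` strictly shrinks every vector.
  have hcontr : ‖T - P‖ < 1 := by
    obtain ⟨x, hx, hnorm⟩ := (T - P).exists_mem_sphere_norm_apply_eq_opNorm
    rw [mem_sphere_zero_iff_norm] at hx
    set y := x - P x
    have hy : (T - P) x = T y := by
      rw [sub_apply, map_sub, ← mul_apply_eq_comp, hTP]
    have hyx : ‖y‖ ≤ ‖x‖ := by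
      rw [show y = Fᗮ.starProjection x from (Submodule.starProjection_orthogonal_val x).symm]
      exact Submodule.norm_starProjection_apply_le _ x
    rw [← hnorm, hy]
    by_cases hTy : T y = y
    · have hy0 : y = 0 := (Submodule.orthogonal_disjoint F).le_bot
        ⟨(hmemF y).mpr hTy, Submodule.sub_starProjection_mem_orthogonal x⟩
      rw [hy0, map_zero, norm_zero]
      exact zero_lt_one
    · exact (hT y hTy).trans_le (hyx.trans_eq hx)
  have hpow : ∀ k : ℕ, T ^ (k + 1) = (T - P) ^ (k + 1) + P := fun k => by
    rw [sub_pow_succ_of_mul_eq hTP hPT F.isIdempotentElem_starProjection, sub_add_cancel]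
  rw [← tendsto_add_atTop_iff_nat 1]
  simp only [hpow]
  simpa using ((tendsto_pow_atTop_nhds_zero_of_norm_lt_one hcontr).comp
    (tendsto_add_atTop_nat 1)).add_const P

end InnerProductSpace

theorem norm_one_sub_two_smul_Wop_le_one {n : ℕ} (T : Submodule ℝ (E n)) {H : E n →L[ℝ] E n}
    (hH : IsSymPSD H) : ‖1 - (2 : ℝ) • Wop T H‖ ≤ 1 :=
  norm_one_sub_two_smul_le_one (norm_sq_le_inner_starProjection_resolvent T hH.2)

theorem one_sub_Mop {n : ℕ} (TJ TG : Submodule ℝ (E n)) (HJ HG : E n →L[ℝ] E n) :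
    1 - Mop TJ TG HJ HG = Wop TG HG * (1 - Wop TJ HJ) + (1 - Wop TG HG) * Wop TJ HJ := by
  ext1 x
  simp only [Mop, add_apply, sub_apply, smul_apply, one_apply_eq_self, mul_apply_eq_comp,
    map_sub]
  module

theorem Mlam_eq_averaged {n : ℕ} (lam : ℝ) (TJ TG : Submodule ℝ (E n)) (HJ HG : E n →L[ℝ] E n) :
    Mlam lam TJ TG HJ HG = (1 - lam / 2) • (1 : E n →L[ℝ] E n)
      + (lam / 2) • ((1 - (2 : ℝ) • Wop TG HG) * (1 - (2 : ℝ) • Wop TJ HJ)) := by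
  ext1 x
  simp only [Mlam, Mop, add_apply, sub_apply, smul_apply, one_apply_eq_self, mul_apply_eq_comp,
    map_sub, map_smul]
  module

/-- For every `λ ∈ (0,2)`: `Fix M_λ = Fix M = ker(W_G(I − W_J) + (I − W_G)W_J)`,
and `M_λ^k → M^∞`, the orthogonal projection onto `Fix M`. -/
theorem statement8 {n : ℕ} (TJ TG : Submodule ℝ (E n)) (HJ HG : E n →L[ℝ] E n)
    (hHJ : IsSymPSD HJ) (hHG : IsSymPSD HG)
    (lam : ℝ) (hlam : lam ∈ Set.Ioo (0 : ℝ) 2) :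
    {x : E n | Mlam lam TJ TG HJ HG x = x} = {x : E n | Mop TJ TG HJ HG x = x} ∧
    {x : E n | Mop TJ TG HJ HG x = x}
      = {x : E n | (Wop TG HG * (1 - Wop TJ HJ) + (1 - Wop TG HG) * Wop TJ HJ) x = 0} ∧
    FixM (Mop TJ TG HJ HG)
      = LinearMap.ker ((Wop TG HG * (1 - Wop TJ HJ) + (1 - Wop TG HG) * Wop TJ HJ : E n →L[ℝ] E n) :
        E n →ₗ[ℝ] E n) ∧
    Tendsto (fun k : ℕ => Mlam lam TJ TG HJ HG ^ k) atTop (𝓝 (Minf TJ TG HJ HG)) := by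
  obtain ⟨hlam₀, hlam₂⟩ := hlam
  have hfix : ∀ x, Mlam lam TJ TG HJ HG x = x ↔ Mop TJ TG HJ HG x = x :=
    averaged_apply_eq_self_iff hlam₀.ne' _
  have hker : ∀ x, Mop TJ TG HJ HG x = x ↔
      (Wop TG HG * (1 - Wop TJ HJ) + (1 - Wop TG HG) * Wop TJ HJ) x = 0 := fun x => by
    rw [← one_sub_Mop, sub_apply, one_apply_eq_self, sub_eq_zero, eq_comm]
  refine ⟨Set.ext hfix, Set.ext hker, ?_, ?_⟩
  · ext x
    rw [FixM, mem_ker_sub_one_iff, hker]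
    rfl
  · have hFix : FixM (Mlam lam TJ TG HJ HG) = FixM (Mop TJ TG HJ HG) := by
      ext x
      rw [FixM, FixM, mem_ker_sub_one_iff, mem_ker_sub_one_iff, hfix]
    rw [Minf, ← hFix]
    refine tendsto_pow_of_norm_apply_lt fun x hx => ?_
    have hR : ‖(1 - (2 : ℝ) • Wop TG HG) * (1 - (2 : ℝ) • Wop TJ HJ)‖ ≤ 1 :=
      norm_mul_le_of_le (norm_one_sub_two_smul_Wop_le_one TG hHG)
        (norm_one_sub_two_smul_Wop_le_one TJ hHJ) |>.trans_eq (one_mul 1)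
    rw [Mlam_eq_averaged] at hx ⊢
    exact norm_averaged_apply_lt hR (by linarith) (by linarith)
      (mt (averaged_apply_eq_self_iff (by linarith) _ x).mpr hx)
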